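/- arXiv:1104.2126 — 5 statements merged into one kernel-verified Lean document; each statement's English description precedes it below -/
import Mathlib

section
/- The function u^a(x,t) = (1/√(2πt))·[cos((x−y)²/(2t) − π/4) − cos((x+y)²/(2t) − π/4)], for fixed y > 0, satisfies ∂²u/∂t² = −(1/4)·∂⁴u/∂x⁴ on (0,∞) × (0,∞), together with the boundary conditions u(0,t) = 0 and ∂²u/∂x²|_{x=0} = 0 for all t > 0. -/
/-!
Writing `K_b(x, t) = (2πt)^(-1/2) cos((x - b)²/(2t) - π/4)`, the absorbing solution is
`K_y - K_{-y}`, the kernel minus its mirror image. Each `K_b` is the real part of the free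
Schrödinger kernel, for which `i ∂ₜ = -½ ∂ₓ²`, so `∂ₜ² K_b = -¼ ∂ₓ⁴ K_b`; both sides
are computed explicitly. At `x = 0` the kernel and its second `x`-derivative depend on `b`
only through `b²`, so they cancel in `K_y - K_{-y}`.
-/

open Real

/-- Absorbing solution for the semi-infinite vibrating rod. -/
noncomputable def ua (y x t : ℝ) : ℝ :=
  (Real.sqrt (2 * Real.pi * t))⁻¹ *
    (Real.cos ((x - y) ^ 2 / (2 * t) - Real.pi / 4) -
      Real.cos ((x + y) ^ 2 / (2 * t) - Real.pi / 4))

open Set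

theorem Set.EqOn.iterate_deriv_succ {𝕜 F : Type*} [NontriviallyNormedField 𝕜]
    [NormedAddCommGroup F] [NormedSpace 𝕜 F] {f g g' : 𝕜 → F} {s : Set 𝕜} {n : ℕ} (hs : IsOpen s)
    (hfg : EqOn (_root_.deriv^[n] f) g s) (hg : ∀ x ∈ s, HasDerivAt g (g' x) x) :
    EqOn (_root_.deriv^[n + 1] f) g' s := by
  intro x hx
  rw [Function.iterate_succ_apply', (hfg.eventuallyEq_of_mem (hs.mem_nhds hx)).deriv_eq]
  exact (hg x hx).deriv

noncomputable def rodAmplitude (t : ℝ) : ℝ := (√(2 * π * t))⁻¹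

noncomputable def rodPhase (b x t : ℝ) : ℝ := (x - b) ^ 2 / (2 * t) - π / 4

noncomputable def rodKernel (b x t : ℝ) : ℝ := rodAmplitude t * cos (rodPhase b x t)

noncomputable def rodKernelDx1 (b x t : ℝ) : ℝ :=
  rodAmplitude t * (-((x - b) / t) * sin (rodPhase b x t))

noncomputable def rodKernelDx2 (b x t : ℝ) : ℝ :=
  rodAmplitude t * (-((x - b) / t) ^ 2 * cos (rodPhase b x t) - sin (rodPhase b x t) / t)

noncomputable def rodKernelDx3 (b x t : ℝ) : ℝ :=
  rodAmplitude t * (((x - b) / t) ^ 3 * sin (rodPhase b x t)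
    - 3 * ((x - b) / t) * cos (rodPhase b x t) / t)

noncomputable def rodKernelDx4 (b x t : ℝ) : ℝ :=
  rodAmplitude t * (((x - b) / t) ^ 4 * cos (rodPhase b x t)
    + 6 * ((x - b) / t) ^ 2 * sin (rodPhase b x t) / t - 3 * cos (rodPhase b x t) / t ^ 2)

noncomputable def rodKernelDt1 (b x t : ℝ) : ℝ :=
  rodAmplitude t * ((x - b) ^ 2 / (2 * t ^ 2) * sin (rodPhase b x t)
    - cos (rodPhase b x t) / (2 * t))

noncomputable def rodKernelDt2 (b x t : ℝ) : ℝ :=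
  rodAmplitude t * ((3 / (4 * t ^ 2) - (x - b) ^ 4 / (4 * t ^ 4)) * cos (rodPhase b x t)
    - 3 * (x - b) ^ 2 / (2 * t ^ 3) * sin (rodPhase b x t))

theorem ua_eq_rodKernel_sub (y x t : ℝ) : ua y x t = rodKernel y x t - rodKernel (-y) x t := by
  simp only [ua, rodKernel, rodAmplitude, rodPhase, sub_neg_eq_add, mul_sub]

theorem rodKernelDt2_eq_neg_quarter_mul_rodKernelDx4 (b x t : ℝ) :
    rodKernelDt2 b x t = -(1 / 4) * rodKernelDx4 b x t := by
  simp only [rodKernelDt2, rodKernelDx4]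
  ring

section Space

variable {b t : ℝ} (x : ℝ)

theorem hasDerivAt_rodPhase_space (ht : t ≠ 0) :
    HasDerivAt (fun z => rodPhase b z t) ((x - b) / t) x := by
  refine ((((hasDerivAt_id' x).sub_const b).fun_pow 2).div_const (2 * t)).sub_const (π / 4)
    |>.congr_deriv ?_
  field_simp
  ring

theorem hasDerivAt_rodKernel_space (ht : t ≠ 0) :
    HasDerivAt (fun z => rodKernel b z t) (rodKernelDx1 b x t) x := by
  refine ((hasDerivAt_rodPhase_space x ht).cos.const_mul (rodAmplitude t)).congr_deriv ?_
  simp only [rodKernelDx1]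
  ring

theorem hasDerivAt_rodKernelDx1_space (ht : t ≠ 0) :
    HasDerivAt (fun z => rodKernelDx1 b z t) (rodKernelDx2 b x t) x := by
  have hw : HasDerivAt (fun z => -((z - b) / t)) (-(1 / t)) x :=
    (((hasDerivAt_id' x).sub_const b).div_const t).neg
  refine ((hw.mul (hasDerivAt_rodPhase_space x ht).sin).const_mul (rodAmplitude t)).congr_deriv ?_
  simp only [rodKernelDx2]
  ring

theorem hasDerivAt_rodKernelDx2_space (ht : t ≠ 0) :
    HasDerivAt (fun z => rodKernelDx2 b z t) (rodKernelDx3 b x t) x := by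
  have hw := ((hasDerivAt_id' x).sub_const b).div_const t
  have hθ := hasDerivAt_rodPhase_space (b := b) x ht
  refine ((((hw.fun_pow 2).fun_neg.mul hθ.cos).sub (hθ.sin.div_const t)).const_mul
    (rodAmplitude t)).congr_deriv ?_
  simp only [rodKernelDx3]
  ring

theorem hasDerivAt_rodKernelDx3_space (ht : t ≠ 0) :
    HasDerivAt (fun z => rodKernelDx3 b z t) (rodKernelDx4 b x t) x := by
  have hw := ((hasDerivAt_id' x).sub_const b).div_const t
  have hθ := hasDerivAt_rodPhase_space (b := b) x ht
  refine ((((hw.fun_pow 3).mul hθ.sin).sub (((hw.const_mul 3).mul hθ.cos).div_const t)).const_mul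
    (rodAmplitude t)).congr_deriv ?_
  simp only [rodKernelDx4]
  ring

end Space

section Time

variable {t : ℝ} (b x : ℝ)

theorem hasDerivAt_rodAmplitude (ht : 0 < t) :
    HasDerivAt rodAmplitude (-rodAmplitude t / (2 * t)) t := by
  have hpos : 0 < 2 * π * t := by positivity
  refine ((hasDerivAt_id' t).const_mul (2 * π)).sqrt hpos.ne' |>.inv (Real.sqrt_pos.2 hpos).ne'
    |>.congr_deriv ?_
  rw [rodAmplitude, sq_sqrt hpos.le]
  field_simp

theorem hasDerivAt_rodPhase_time (ht : t ≠ 0) :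
    HasDerivAt (fun s => rodPhase b x s) (-(x - b) ^ 2 / (2 * t ^ 2)) t := by
  refine ((hasDerivAt_const t ((x - b) ^ 2)).div ((hasDerivAt_id' t).const_mul 2)
    (mul_ne_zero two_ne_zero ht)).sub_const (π / 4) |>.congr_deriv ?_
  field_simp
  ring

theorem hasDerivAt_rodKernel_time (ht : 0 < t) :
    HasDerivAt (fun s => rodKernel b x s) (rodKernelDt1 b x t) t := by
  refine ((hasDerivAt_rodAmplitude ht).mul (hasDerivAt_rodPhase_time b x ht.ne').cos).congr_deriv ?_
  simp only [rodKernelDt1]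
  field_simp
  ring

theorem hasDerivAt_rodKernelDt1_time (ht : 0 < t) :
    HasDerivAt (fun s => rodKernelDt1 b x s) (rodKernelDt2 b x t) t := by
  have hθ := hasDerivAt_rodPhase_time b x ht.ne'
  have hq := (hasDerivAt_const t ((x - b) ^ 2)).fun_div (((hasDerivAt_id' t).fun_pow 2).const_mul 2)
    (by positivity)
  have hr := hθ.cos.fun_div ((hasDerivAt_id' t).const_mul 2) (by positivity)
  refine ((hasDerivAt_rodAmplitude ht).mul ((hq.fun_mul hθ.sin).fun_sub hr)).congr_deriv ?_
  simp only [rodKernelDt2]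
  field_simp
  ring

end Time

theorem rodPhase_zero_neg (b t : ℝ) : rodPhase (-b) 0 t = rodPhase b 0 t := by
  simp only [rodPhase, zero_sub, sub_neg_eq_add, zero_add, neg_sq]

theorem rodKernelDx2_zero_neg (b t : ℝ) : rodKernelDx2 (-b) 0 t = rodKernelDx2 b 0 t := by
  simp only [rodKernelDx2, rodPhase_zero_neg, zero_sub, neg_neg, neg_div, neg_sq]

theorem ua_zero_left (y t : ℝ) : ua y 0 t = 0 := by
  rw [ua_eq_rodKernel_sub, rodKernel, rodKernel, rodPhase_zero_neg, sub_self]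

section Iterates

variable (y : ℝ) {t : ℝ}

theorem iterate_deriv_two_ua_space (ht : t ≠ 0) :
    deriv^[2] (fun z => ua y z t) = fun z => rodKernelDx2 y z t - rodKernelDx2 (-y) z t := by
  have h0 : EqOn (deriv^[0] fun z => ua y z t)
      (fun z => rodKernel y z t - rodKernel (-y) z t) univ :=
    fun z _ => ua_eq_rodKernel_sub y z t
  have h1 := h0.iterate_deriv_succ isOpen_univ fun z _ =>
    (hasDerivAt_rodKernel_space z ht).sub (hasDerivAt_rodKernel_space z ht)
  have h2 := h1.iterate_deriv_succ isOpen_univ fun z _ =>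
    (hasDerivAt_rodKernelDx1_space z ht).sub (hasDerivAt_rodKernelDx1_space z ht)
  exact funext fun z => h2 (mem_univ z)

theorem iterate_deriv_four_ua_space (ht : t ≠ 0) :
    deriv^[4] (fun z => ua y z t) = fun z => rodKernelDx4 y z t - rodKernelDx4 (-y) z t := by
  have h2 : EqOn (deriv^[2] fun z => ua y z t)
      (fun z => rodKernelDx2 y z t - rodKernelDx2 (-y) z t) univ := by
    rw [iterate_deriv_two_ua_space y ht]
    exact eqOn_refl _ _
  have h3 := h2.iterate_deriv_succ isOpen_univ fun z _ =>
    (hasDerivAt_rodKernelDx2_space z ht).sub (hasDerivAt_rodKernelDx2_space z ht)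
  have h4 := h3.iterate_deriv_succ isOpen_univ fun z _ =>
    (hasDerivAt_rodKernelDx3_space z ht).sub (hasDerivAt_rodKernelDx3_space z ht)
  exact funext fun z => h4 (mem_univ z)

theorem eqOn_iterate_deriv_two_ua_time (x : ℝ) :
    EqOn (deriv^[2] fun s => ua y x s)
      (fun s => rodKernelDt2 y x s - rodKernelDt2 (-y) x s) (Ioi 0) := by
  have h0 : EqOn (deriv^[0] fun s => ua y x s)
      (fun s => rodKernel y x s - rodKernel (-y) x s) (Ioi 0) :=
    fun s _ => ua_eq_rodKernel_sub y x s
  have h1 := h0.iterate_deriv_succ isOpen_Ioi fun s hs =>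
    (hasDerivAt_rodKernel_time y x hs).sub (hasDerivAt_rodKernel_time (-y) x hs)
  exact h1.iterate_deriv_succ isOpen_Ioi fun s hs =>
    (hasDerivAt_rodKernelDt1_time y x hs).sub (hasDerivAt_rodKernelDt1_time (-y) x hs)

end Iterates

theorem absorbing_solution_rod_general (y : ℝ) :
    (∀ x t : ℝ, 0 < x → 0 < t →
        (deriv^[2] fun s => ua y x s) t =
          -(1 / 4) * (deriv^[4] fun z => ua y z t) x) ∧
    (∀ t : ℝ, 0 < t → ua y 0 t = 0) ∧
    (∀ t : ℝ, 0 < t → (deriv^[2] fun z => ua y z t) 0 = 0) := by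
  refine ⟨fun x t _ ht => ?_, fun t _ => ua_zero_left y t, fun t ht => ?_⟩
  · rw [eqOn_iterate_deriv_two_ua_time y x ht, iterate_deriv_four_ua_space y ht.ne']
    simp only [rodKernelDt2_eq_neg_quarter_mul_rodKernelDx4]
    ring
  · rw [iterate_deriv_two_ua_space y ht.ne']
    exact sub_eq_zero.2 (rodKernelDx2_zero_neg y t).symm

theorem absorbing_solution_rod (y : ℝ) (hy : 0 < y) :
    (∀ x t : ℝ, 0 < x → 0 < t →
        (deriv^[2] fun s => ua y x s) t =
          -(1 / 4) * (deriv^[4] fun z => ua y z t) x) ∧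
    (∀ t : ℝ, 0 < t → ua y 0 t = 0) ∧
    (∀ t : ℝ, 0 < t → (deriv^[2] fun z => ua y z t) 0 = 0) :=
  absorbing_solution_rod_general y
end

section
/- For fixed μ > 0 and 0 < ν ≤ 1, the function g(x) = (μ^{ν/2−1}/√2)·e^{−|x|μ^{ν/2}}·cos(|x|μ^{ν/2} − π/4) has Fourier transform ∫_{-∞}^{∞} e^{iβx} g(x) dx = μ^{2ν−1}/(μ^{2ν} + β⁴/4) for every β ∈ ℝ. -/
/-!
Since `cos (t - π/4) = (cos t + sin t)/√2`, the kernel `e^{-t} cos (t - π/4)` with `t = b|x|`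
is a combination of `e^{-p|x|}` and `e^{-q|x|}` for the conjugate exponents `p, q = (1 ∓ i) b`,
which have positive real part. Splitting the line at `0`, the Fourier transform of `e^{-a|x|}` is
`1/(a + iβ) + 1/(a - iβ) = 2a/(a² + β²)`; substituting `p² = -2ib²` and `q² = 2ib²` gives
`√2 b³/(b⁴ + β⁴/4)`, and `b = μ^{ν/2}` turns this into the stated value.
-/

open Real MeasureTheory Set Complex

lemma ofReal_exp_neg_mul_cos_sub_pi_div_four (t : ℝ) :
    ((Real.exp (-t) * Real.cos (t - π / 4) : ℝ) : ℂ) =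
      ((1 - I) * cexp (-(1 - I) * t) + (1 + I) * cexp (-(1 + I) * t)) / (2 * √2) := by
  have hcos : Real.cos (t - π / 4) = (Real.cos t + Real.sin t) / √2 := by
    rw [Real.cos_sub, Real.cos_pi_div_four, Real.sin_pi_div_four]
    field_simp
    rw [sq_sqrt zero_le_two]
  have h1 : cexp (-(1 - I) * t) = Real.exp (-t) * (Real.cos t + Real.sin t * I) := by
    rw [show -(1 - I) * (t : ℂ) = (-t : ℝ) + t * I by push_cast; ring, Complex.exp_add,
      Complex.exp_mul_I, ← Complex.ofReal_exp, ← Complex.ofReal_cos, ← Complex.ofReal_sin]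
  have h2 : cexp (-(1 + I) * t) = Real.exp (-t) * (Real.cos t - Real.sin t * I) := by
    rw [show -(1 + I) * (t : ℂ) = (-t : ℝ) + (-t : ℝ) * I by push_cast; ring, Complex.exp_add,
      Complex.exp_mul_I, ← Complex.ofReal_exp, ← Complex.ofReal_cos, ← Complex.ofReal_sin,
      Real.cos_neg, Real.sin_neg]
    push_cast; ring
  have hs : (√2 : ℂ) ≠ 0 := by exact_mod_cast (by positivity : (√2 : ℝ) ≠ 0)
  rw [h1, h2, hcos, Complex.ofReal_mul, Complex.ofReal_div, Complex.ofReal_add]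
  field_simp
  linear_combination (2 * Real.sin t : ℂ) * I_sq

lemma cexp_I_mul_mul_cexp_neg_mul_abs_of_nonpos (a : ℂ) (β : ℝ) {x : ℝ} (hx : x ≤ 0) :
    cexp (I * β * x) * cexp (-a * |x|) = cexp ((a + I * β) * x) := by
  rw [abs_of_nonpos hx, ← Complex.exp_add]
  push_cast
  ring_nf

lemma cexp_I_mul_mul_cexp_neg_mul_abs_of_nonneg (a : ℂ) (β : ℝ) {x : ℝ} (hx : 0 ≤ x) :
    cexp (I * β * x) * cexp (-a * |x|) = cexp ((I * β - a) * x) := by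
  rw [abs_of_nonneg hx, ← Complex.exp_add]
  ring_nf

section

variable {a : ℂ} (ha : 0 < a.re) (β : ℝ)
include ha

lemma integrable_cexp_I_mul_mul_cexp_neg_mul_abs :
    Integrable fun x : ℝ ↦ cexp (I * β * x) * cexp (-a * |x|) := by
  rw [← integrableOn_univ, ← Iic_union_Ioi (a := (0 : ℝ))]
  refine IntegrableOn.union ?_ ?_
  · refine (integrableOn_exp_mul_complex_Iic (a := a + I * β) (by simpa using ha) 0).congr_fun
      (fun x hx ↦ ?_) measurableSet_Iic
    exact (cexp_I_mul_mul_cexp_neg_mul_abs_of_nonpos a β hx).symm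
  · refine (integrableOn_exp_mul_complex_Ioi (a := I * β - a) (by simpa using ha) 0).congr_fun
      (fun x hx ↦ ?_) measurableSet_Ioi
    exact (cexp_I_mul_mul_cexp_neg_mul_abs_of_nonneg a β hx.le).symm

lemma integral_cexp_I_mul_mul_cexp_neg_mul_abs :
    ∫ x : ℝ, cexp (I * β * x) * cexp (-a * |x|) = 2 * a / (a ^ 2 + β ^ 2) := by
  have hf := integrable_cexp_I_mul_mul_cexp_neg_mul_abs ha β
  have hplus : a + I * β ≠ 0 := fun h ↦ by simpa [ha.ne'] using congrArg re h
  have hminus : I * β - a ≠ 0 := fun h ↦ by simpa [ha.ne'] using congrArg re h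
  have hIic : ∫ x in Iic (0 : ℝ), cexp (I * β * x) * cexp (-a * |x|) = 1 / (a + I * β) := by
    rw [setIntegral_congr_fun measurableSet_Iic
      (fun x hx ↦ cexp_I_mul_mul_cexp_neg_mul_abs_of_nonpos a β hx),
      integral_exp_mul_complex_Iic (by simpa using ha)]
    simp
  have hIoi : ∫ x in Ioi (0 : ℝ), cexp (I * β * x) * cexp (-a * |x|) = -1 / (I * β - a) := by
    rw [setIntegral_congr_fun measurableSet_Ioi
      (fun x hx ↦ cexp_I_mul_mul_cexp_neg_mul_abs_of_nonneg a β hx.le),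
      integral_exp_mul_complex_Ioi (by simpa using ha)]
    simp
  rw [← intervalIntegral.integral_Iic_add_Ioi hf.integrableOn hf.integrableOn, hIic, hIoi]
  have hsq : a ^ 2 + (β : ℂ) ^ 2 = (a + I * β) * -(I * β - a) := by
    linear_combination (β : ℂ) ^ 2 * I_sq
  rw [hsq]
  field_simp
  ring

end

lemma integral_cexp_I_mul_mul_exp_neg_abs_mul_cos_sub_pi_div_four (β : ℝ) {b : ℝ}
    (hb : 0 < b) :
    ∫ x : ℝ, cexp (I * β * x) *
        ((Real.exp (-|x| * b) * Real.cos (|x| * b - π / 4) : ℝ) : ℂ) =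
      ((√2 * b ^ 3 / (b ^ 4 + β ^ 4 / 4) : ℝ) : ℂ) := by
  set p : ℂ := (1 - I) * b
  set q : ℂ := (1 + I) * b
  have hp : 0 < p.re := by simpa [p] using hb
  have hq : 0 < q.re := by simpa [q] using hb
  have hsplit : ∀ x : ℝ,
      cexp (I * β * x) * ((Real.exp (-|x| * b) * Real.cos (|x| * b - π / 4) : ℝ) : ℂ) =
        (1 - I) / (2 * √2) * (cexp (I * β * x) * cexp (-p * |x|)) +
          (1 + I) / (2 * √2) * (cexp (I * β * x) * cexp (-q * |x|)) := by
    intro x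
    rw [neg_mul, ofReal_exp_neg_mul_cos_sub_pi_div_four]
    simp only [p, q]
    push_cast
    ring_nf
  rw [integral_congr_ae (.of_forall hsplit),
    integral_add ((integrable_cexp_I_mul_mul_cexp_neg_mul_abs hp β).const_mul _)
      ((integrable_cexp_I_mul_mul_cexp_neg_mul_abs hq β).const_mul _),
    integral_const_mul, integral_const_mul, integral_cexp_I_mul_mul_cexp_neg_mul_abs hp,
    integral_cexp_I_mul_mul_cexp_neg_mul_abs hq]
  have hs : (√2 : ℂ) ≠ 0 := by exact_mod_cast (by positivity : (√2 : ℝ) ≠ 0)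
  have hp2 : p ^ 2 + β ^ 2 ≠ 0 := fun h ↦ by simpa [p, sq, hb.ne'] using congrArg im h
  have hq2 : q ^ 2 + β ^ 2 ≠ 0 := fun h ↦ by simpa [q, sq, hb.ne'] using congrArg im h
  have hnum : (1 - I) * p * (q ^ 2 + β ^ 2) + (1 + I) * q * (p ^ 2 + β ^ 2) = 8 * b ^ 3 := by
    simp only [p, q]
    ring_nf
    simp only [I_sq, I_pow_four]
    ring
  have hden : (p ^ 2 + β ^ 2) * (q ^ 2 + β ^ 2) = 4 * (b ^ 4 + β ^ 4 / 4) := by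
    simp only [p, q]
    ring_nf
    simp only [I_sq, I_pow_four]
    ring
  have hs2 : (√2 : ℂ) ^ 2 = 2 := by norm_cast; exact sq_sqrt zero_le_two
  calc _ = ((1 - I) * p * (q ^ 2 + β ^ 2) + (1 + I) * q * (p ^ 2 + β ^ 2)) /
          (√2 * ((p ^ 2 + β ^ 2) * (q ^ 2 + β ^ 2))) := by field_simp
    _ = ((√2 * b ^ 3 / (b ^ 4 + β ^ 4 / 4) : ℝ) : ℂ) := by
      have hD : (b : ℂ) ^ 4 + β ^ 4 / 4 ≠ 0 := by
        exact_mod_cast (by positivity : b ^ 4 + β ^ 4 / 4 ≠ 0)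
      rw [hnum, hden]
      push_cast
      field_simp
      rw [hs2]
      ring

theorem fourier_transform_laplace_kernel_general (μ ν : ℝ) (hμ : 0 < μ) (β : ℝ) :
    ∫ x : ℝ, Complex.exp (Complex.I * β * x) *
        (((μ ^ (ν / 2 - 1) / Real.sqrt 2) * Real.exp (-|x| * μ ^ (ν / 2)) *
          Real.cos (|x| * μ ^ (ν / 2) - Real.pi / 4) : ℝ) : ℂ) =
      ((μ ^ (2 * ν - 1) / (μ ^ (2 * ν) + β ^ 4 / 4) : ℝ) : ℂ) := by
  set b := μ ^ (ν / 2) with hb_def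
  have hb : 0 < b := rpow_pos_of_pos hμ _
  have hb4 : μ ^ (2 * ν) = b ^ 4 := by
    rw [hb_def, ← rpow_natCast, ← rpow_mul hμ.le]
    ring_nf
  have hconst : μ ^ (ν / 2 - 1) = b / μ := by rw [rpow_sub hμ, rpow_one]
  have hnum : μ ^ (2 * ν - 1) = b ^ 4 / μ := by rw [rpow_sub hμ, rpow_one, hb4]
  calc _ = ((μ ^ (ν / 2 - 1) / √2 : ℝ) : ℂ) * ∫ x : ℝ, cexp (I * β * x) *
        ((Real.exp (-|x| * b) * Real.cos (|x| * b - π / 4) : ℝ) : ℂ) := by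
        rw [← integral_const_mul]
        congr with x
        push_cast
        ring
    _ = _ := by
      rw [integral_cexp_I_mul_mul_exp_neg_abs_mul_cos_sub_pi_div_four β hb, ← ofReal_mul,
        hconst, hb4, hnum]
      congr 1
      field_simp

theorem fourier_transform_laplace_kernel (μ ν : ℝ) (hμ : 0 < μ) (hν : 0 < ν)
    (hν1 : ν ≤ 1) (β : ℝ) :
    ∫ x : ℝ, Complex.exp (Complex.I * β * x) *
        (((μ ^ (ν / 2 - 1) / Real.sqrt 2) * Real.exp (-|x| * μ ^ (ν / 2)) *
          Real.cos (|x| * μ ^ (ν / 2) - Real.pi / 4) : ℝ) : ℂ) =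
      ((μ ^ (2 * ν - 1) / (μ ^ (2 * ν) + β ^ 4 / 4) : ℝ) : ℂ) :=
  fourier_transform_laplace_kernel_general μ ν hμ β
end

section
/- For each n ≥ 1, the n-fold density of the Fresnel pseudo-process satisfies the consistency (marginalization) property: integrating (2π)^{−n/2}·(∏_{j=1}^n (t_j−t_{j−1})^{−1/2})·cos(Σ_{j=1}^n (x_j−x_{j−1})²/(2(t_j−t_{j−1})) − nπ/4) over x_n ∈ ℝ yields the corresponding (n−1)-fold density (2π)^{−(n−1)/2}·(∏_{j=1}^{n−1}(t_j−t_{j−1})^{−1/2})·cos(Σ_{j=1}^{n−1}(x_j−x_{j−1})²/(2(t_j−t_{j−1})) − (n−1)π/4). -/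
/-!
For `0 < re b` the Gaussian integral `∫ exp (-b x²) = (π / b) ^ (1/2)` comes with the tail bound
`‖∫_A^∞ exp (-b x²)‖ ≤ 1 / (‖b‖ A)`, obtained by integrating by parts against the derivative
`-2 b x exp (-b x²)`; it is uniform in `b`. By continuity in `b` the resulting estimate for
truncated integrals extends to the imaginary axis, which yields the Fresnel integral
`∫ exp (i c u²) du = √(π / c) exp (i π / 4)` as a limit over symmetric intervals, and, taking real
parts, `∫ cos (θ + c (u - a)²) du = √(π / c) cos (θ + π / 4)`. Integrating out `x_n` is this
with `c = 1 / (2 (t_n - t_{n-1}))`: the factor `√(2π (t_n - t_{n-1}))` cancels one normalising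
factor of the density and the phase gains `π / 4`.
-/

open Real Filter intervalIntegral
open MeasureTheory Set Topology

section Fresnel

open Complex

lemma norm_cexp_neg_mul_sq_le_one {b : ℂ} (hb : 0 ≤ b.re) (x : ℝ) :
    ‖cexp (-b * x ^ 2)‖ ≤ 1 := by
  rw [norm_cexp_neg_mul_sq, Real.exp_le_one_iff, neg_mul, neg_nonpos]
  positivity

lemma hasDerivAt_inv_mul_cexp_neg_mul_sq {b : ℂ} (hb : b ≠ 0) {x : ℝ} (hx : x ≠ 0) :
    HasDerivAt (fun y : ℝ => -(2 * b)⁻¹ * (y : ℂ)⁻¹ * cexp (-b * y ^ 2))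
      (cexp (-b * x ^ 2) + (2 * b)⁻¹ * ((x : ℂ) ^ 2)⁻¹ * cexp (-b * x ^ 2)) x := by
  have hxC : (x : ℂ) ≠ 0 := ofReal_ne_zero.mpr hx
  have hinv : HasDerivAt (fun z : ℂ => z⁻¹) (-((x : ℂ) ^ 2)⁻¹) x := hasDerivAt_inv hxC
  have hexp : HasDerivAt (fun z : ℂ => cexp (-b * z ^ 2))
      (cexp (-b * x ^ 2) * (-b * (2 * (x : ℂ) ^ 1))) x :=
    ((hasDerivAt_pow 2 (x : ℂ)).const_mul (-b)).cexp
  refine (((hinv.const_mul (-(2 * b)⁻¹)).mul hexp).comp_ofReal).congr_deriv ?_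
  field_simp
  ring

lemma norm_integral_Ioi_cexp_neg_mul_sq_le {b : ℂ} (hb : 0 < b.re) {A : ℝ} (hA : 0 < A) :
    ‖∫ x in Ioi A, cexp (-b * x ^ 2)‖ ≤ (‖b‖ * A)⁻¹ := by
  have hb0 : b ≠ 0 := fun h => by simp [h] at hb
  set f : ℝ → ℂ := fun y => -(2 * b)⁻¹ * (y : ℂ)⁻¹ * cexp (-b * y ^ 2)
  set g : ℝ → ℂ := fun y => (2 * b)⁻¹ * ((y : ℂ) ^ 2)⁻¹ * cexp (-b * y ^ 2)
  have hnorm_f : ∀ y, 0 < y → ‖f y‖ ≤ (2 * ‖b‖)⁻¹ * y⁻¹ := fun y hy => by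
    simpa [f, norm_mul, abs_of_pos hy] using
      mul_le_of_le_one_right (by positivity) (norm_cexp_neg_mul_sq_le_one hb.le y)
  have hnorm_g : ∀ y ∈ Ioi A, ‖g y‖ ≤ (2 * ‖b‖)⁻¹ * y ^ (-2 : ℝ) := fun y hy => by
    rw [Real.rpow_neg (hA.trans hy).le, Real.rpow_two]
    simpa [g, norm_mul] using
      mul_le_of_le_one_right (by positivity) (norm_cexp_neg_mul_sq_le_one hb.le y)
  have hbound_int : IntegrableOn (fun y : ℝ => (2 * ‖b‖)⁻¹ * y ^ (-2 : ℝ)) (Ioi A) :=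
    (integrableOn_Ioi_rpow_of_lt (by norm_num) hA).const_mul _
  have hg_int : IntegrableOn g (Ioi A) := by
    refine hbound_int.mono' ?_ ((ae_restrict_iff' measurableSet_Ioi).mpr (.of_forall hnorm_g))
    refine ContinuousOn.aestronglyMeasurable ?_ measurableSet_Ioi
    refine ContinuousOn.mul (ContinuousOn.mul continuousOn_const ?_) (by fun_prop)
    exact ContinuousOn.inv₀ (by fun_prop) fun y hy =>
      pow_ne_zero 2 (ofReal_ne_zero.mpr (hA.trans hy).ne')
  have hf_lim : Tendsto f atTop (𝓝 0) := by
    refine squeeze_zero_norm' ?_ (tendsto_inv_atTop_zero.const_mul ((2 * ‖b‖)⁻¹) |>.trans ?_)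
    · filter_upwards [eventually_gt_atTop 0] with y hy using hnorm_f y hy
    · simp
  have hFTC := integral_Ioi_of_hasDerivAt_of_tendsto'
    (fun y hy => hasDerivAt_inv_mul_cexp_neg_mul_sq hb0 (hA.trans_le hy).ne')
    ((integrable_cexp_neg_mul_sq hb).integrableOn.add hg_int) hf_lim
  rw [integral_add (integrable_cexp_neg_mul_sq hb).integrableOn hg_int] at hFTC
  have hg_bound : ‖∫ y in Ioi A, g y‖ ≤ (2 * ‖b‖)⁻¹ * A⁻¹ := by
    refine (norm_integral_le_of_norm_le hbound_int
      ((ae_restrict_iff' measurableSet_Ioi).mpr (.of_forall hnorm_g))).trans_eq ?_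
    rw [MeasureTheory.integral_const_mul, integral_Ioi_rpow_of_lt (by norm_num) hA]
    norm_num [Real.rpow_neg_one]
  calc ‖∫ x in Ioi A, cexp (-b * x ^ 2)‖ = ‖-f A - ∫ y in Ioi A, g y‖ := by
        rw [eq_sub_of_add_eq hFTC, zero_sub]
    _ ≤ ‖f A‖ + ‖∫ y in Ioi A, g y‖ := by simpa using norm_sub_le (-f A) _
    _ ≤ (2 * ‖b‖)⁻¹ * A⁻¹ + (2 * ‖b‖)⁻¹ * A⁻¹ := add_le_add (hnorm_f A hA) hg_bound
    _ = (‖b‖ * A)⁻¹ := by ring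

lemma norm_intervalIntegral_cexp_neg_mul_sq_sub_le {b : ℂ} (hb : 0 < b.re) {A₁ A₂ : ℝ}
    (hA₁ : 0 < A₁) (hA₂ : 0 < A₂) :
    ‖(∫ x in (-A₁)..A₂, cexp (-b * x ^ 2)) - (π / b) ^ (1 / 2 : ℂ)‖ ≤
      (‖b‖ * A₁)⁻¹ + (‖b‖ * A₂)⁻¹ := by
  have hint := integrable_cexp_neg_mul_sq hb
  have hleft : ∫ x in Iic (-A₁), cexp (-b * x ^ 2) = ∫ x in Ioi A₁, cexp (-b * x ^ 2) := by
    simp [← integral_comp_neg_Ioi]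
  have hsplit : (∫ x in (-A₁)..A₂, cexp (-b * x ^ 2)) - (π / b) ^ (1 / 2 : ℂ) =
      -((∫ x in Ioi A₁, cexp (-b * x ^ 2)) + ∫ x in Ioi A₂, cexp (-b * x ^ 2)) := by
    rw [← integral_gaussian_complex hb, ← integral_Iic_add_Ioi (b := A₂) hint.integrableOn
      hint.integrableOn, ← integral_Iic_sub_Iic hint.integrableOn hint.integrableOn, hleft]
    ring
  rw [hsplit, norm_neg]
  exact (norm_add_le _ _).trans (add_le_add (norm_integral_Ioi_cexp_neg_mul_sq_le hb hA₁)
    (norm_integral_Ioi_cexp_neg_mul_sq_le hb hA₂))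

lemma div_mem_slitPlane_of_re_nonneg {b : ℂ} (hb : 0 ≤ b.re) (hb0 : b ≠ 0) {r : ℝ} (hr : 0 < r) :
    (r : ℂ) / b ∈ slitPlane := by
  have hnormSq : 0 < normSq b := normSq_pos.mpr hb0
  rw [mem_slitPlane_iff, div_re, div_im]
  simp only [ofReal_re, ofReal_im, zero_mul, zero_div, add_zero, zero_sub]
  rcases hb.lt_or_eq with hre | hre
  · exact .inl (by positivity)
  · have him : b.im ≠ 0 := fun him => hb0 (Complex.ext hre.symm him)
    exact .inr (by field_simp; simp [hr.ne', him, hb0])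

lemma norm_intervalIntegral_cexp_neg_mul_sq_sub_le_of_re_nonneg {b : ℂ} (hb : 0 ≤ b.re)
    (hb0 : b ≠ 0) {A₁ A₂ : ℝ} (hA₁ : 0 < A₁) (hA₂ : 0 < A₂) :
    ‖(∫ x in (-A₁)..A₂, cexp (-b * x ^ 2)) - (π / b) ^ (1 / 2 : ℂ)‖ ≤
      (‖b‖ * A₁)⁻¹ + (‖b‖ * A₂)⁻¹ := by
  have hI : Continuous fun β : ℂ => ∫ x in (-A₁)..A₂, cexp (-β * x ^ 2) :=
    continuous_parametric_intervalIntegral_of_continuous' (by fun_prop) _ _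
  have hS : ContinuousAt (fun β : ℂ => ((π : ℂ) / β) ^ (1 / 2 : ℂ)) b :=
    (continuousAt_const.div continuousAt_id hb0).cpow continuousAt_const
      (div_mem_slitPlane_of_re_nonneg hb hb0 pi_pos)
  have hR : ContinuousAt (fun β : ℂ => (‖β‖ * A₁)⁻¹ + (‖β‖ * A₂)⁻¹) b := by
    have := norm_pos_iff.mpr hb0
    fun_prop (disch := positivity)
  have hpath : Tendsto (fun ε : ℝ => b + ε) (𝓝[>] 0) (𝓝 b) :=
    ((continuous_const.add continuous_ofReal).tendsto' 0 b (by simp)).mono_left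
      nhdsWithin_le_nhds
  refine le_of_tendsto_of_tendsto ((hI.continuousAt.sub hS).norm.tendsto.comp hpath)
    (hR.tendsto.comp hpath) ?_
  filter_upwards [self_mem_nhdsWithin] with ε (hε : 0 < ε)
  exact norm_intervalIntegral_cexp_neg_mul_sq_sub_le
    (by simpa using add_pos_of_nonneg_of_pos hb hε) hA₁ hA₂

lemma cpow_one_half_div_neg_mul_I {c : ℝ} (hc : 0 < c) :
    ((π : ℂ) / -(c * I)) ^ (1 / 2 : ℂ) = √(π / c) * cexp (π / 4 * I) := by
  set w : ℂ := √(π / c) * cexp (π / 4 * I)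
  have hw : 0 < w.re := by
    rw [re_ofReal_mul, show (π / 4 : ℂ) = ((π / 4 : ℝ) : ℂ) by push_cast; rfl,
      exp_ofReal_mul_I_re, cos_pi_div_four]
    have : 0 < π / c := by positivity
    positivity
  have hsq : w ^ 2 = π / -(c * I) := by
    rw [mul_pow, ← ofReal_pow, sq_sqrt (by positivity), ← Complex.exp_nat_mul,
      show ((2 : ℕ) : ℂ) * (π / 4 * I) = π / 2 * I by push_cast; ring, exp_pi_div_two_mul_I]
    field_simp
    rw [I_sq]
    push_cast
    field_simp
  rw [← hsq, one_div, sq_cpow_two_inv hw]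

lemma tendsto_integral_cexp_mul_sq_mul_I {c : ℝ} (hc : 0 < c) (a : ℝ) :
    Tendsto (fun A : ℝ => ∫ u in (-A)..A, cexp (c * (u - a) ^ 2 * I)) atTop
      (𝓝 (√(π / c) * cexp (π / 4 * I))) := by
  rw [← cpow_one_half_div_neg_mul_I hc]
  set b : ℂ := -(c * I)
  have hb : b.re = 0 := by simp [b]
  have hb0 : b ≠ 0 := by simp [b, hc.ne']
  have hnorm : ‖b‖ = c := by simp [b, hc.le]
  have hshift : ∀ A : ℝ, ∫ u in (-A)..A, cexp (c * (u - a) ^ 2 * I) =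
      ∫ x in (-(A + a))..(A - a), cexp (-b * x ^ 2) := fun A => by
    rw [neg_add', ← integral_comp_sub_right (fun x : ℝ => cexp (-b * x ^ 2))]
    congr 1 with u
    simp only [b, neg_neg, ofReal_sub]
    ring_nf
  have hbound : ∀ᶠ A in atTop, ‖(∫ u in (-A)..A, cexp (c * (u - a) ^ 2 * I)) -
      (π / b) ^ (1 / 2 : ℂ)‖ ≤ (c * (A + a))⁻¹ + (c * (A + -a))⁻¹ := by
    filter_upwards [eventually_gt_atTop |a|] with A hA
    rw [hshift, ← hnorm, ← sub_eq_add_neg]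
    exact norm_intervalIntegral_cexp_neg_mul_sq_sub_le_of_re_nonneg hb.ge hb0
      (by linarith [neg_abs_le a]) (by linarith [le_abs_self a])
  have hdecay : ∀ s : ℝ, Tendsto (fun A : ℝ => (c * (A + s))⁻¹) atTop (𝓝 0) := fun s =>
    tendsto_inv_atTop_zero.comp ((tendsto_atTop_add_const_right _ s tendsto_id).const_mul_atTop hc)
  exact tendsto_iff_norm_sub_tendsto_zero.mpr (squeeze_zero' (.of_forall fun _ => norm_nonneg _)
    hbound (by simpa using (hdecay a).add (hdecay (-a))))

lemma tendsto_integral_cos_add_mul_sq {c : ℝ} (hc : 0 < c) (a θ : ℝ) :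
    Tendsto (fun A : ℝ => ∫ u in (-A)..A, Real.cos (θ + c * (u - a) ^ 2)) atTop
      (𝓝 (√(π / c) * Real.cos (θ + π / 4))) := by
  have hre : ∀ u : ℝ, Real.cos (θ + c * (u - a) ^ 2) =
      (cexp (θ * I) * cexp (c * (u - a) ^ 2 * I)).re := fun u => by
    rw [← Complex.exp_add, ← exp_ofReal_mul_I_re]
    push_cast
    ring_nf
  have hlim := (continuous_re.tendsto _).comp
    ((tendsto_integral_cexp_mul_sq_mul_I hc a).const_mul (cexp (θ * I)))
  convert hlim using 1
  · ext A
    simp only [Function.comp, hre, ← intervalIntegral.integral_const_mul]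
    exact reCLM.intervalIntegral_comp_comm (Continuous.intervalIntegrable (by fun_prop :
      Continuous fun u : ℝ => cexp (θ * I) * cexp (c * (u - a) ^ 2 * I)) _ _)
  · rw [mul_left_comm, ← Complex.exp_add, re_ofReal_mul, ← exp_ofReal_mul_I_re]
    push_cast
    ring_nf

end Fresnel

lemma rpow_neg_div_two_mul_sqrt {r : ℝ} (hr : 0 < r) (s : ℝ) :
    r ^ (-s / 2) * √r = r ^ (-(s - 1) / 2) := by
  rw [sqrt_eq_rpow, ← rpow_add hr]
  ring_nf

theorem fresnel_pseudo_process_consistency_general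
    (n : ℕ) (hn : 1 ≤ n) (t x : ℕ → ℝ)
    (hmono : ∀ j < n, t j < t (j + 1)) :
    Tendsto (fun A : ℝ =>
        ∫ xn in (-A)..A,
          (2 * Real.pi) ^ (-(n : ℝ) / 2) *
            (∏ j ∈ Finset.range n, (Real.sqrt (t (j + 1) - t j))⁻¹) *
            Real.cos
              ((∑ j ∈ Finset.range (n - 1),
                  (x (j + 1) - x j) ^ 2 / (2 * (t (j + 1) - t j))) +
                (xn - x (n - 1)) ^ 2 / (2 * (t n - t (n - 1))) -
                n * Real.pi / 4))
      atTop
      (nhds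
        ((2 * Real.pi) ^ (-((n : ℝ) - 1) / 2) *
          (∏ j ∈ Finset.range (n - 1), (Real.sqrt (t (j + 1) - t j))⁻¹) *
          Real.cos
            ((∑ j ∈ Finset.range (n - 1),
                (x (j + 1) - x j) ^ 2 / (2 * (t (j + 1) - t j))) -
              ((n : ℝ) - 1) * Real.pi / 4))) := by
  obtain ⟨m, rfl⟩ : ∃ m, n = m + 1 := ⟨n - 1, by omega⟩
  simp only [Nat.add_sub_cancel, intervalIntegral.integral_const_mul]
  have hd : 0 < t (m + 1) - t m := sub_pos.mpr (hmono m m.lt_succ_self)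
  set d := t (m + 1) - t m with hd_def
  set S := ∑ j ∈ Finset.range m, (x (j + 1) - x j) ^ 2 / (2 * (t (j + 1) - t j))
  set N : ℝ := ((m + 1 : ℕ) : ℝ) * π / 4
  have hquadratic : ∀ u, S + (u - x m) ^ 2 / (2 * d) - N = (S - N) + (2 * d)⁻¹ * (u - x m) ^ 2 :=
    fun u => by ring
  simp_rw [hquadratic]
  convert (tendsto_integral_cos_add_mul_sq (c := (2 * d)⁻¹) (by positivity) (x m)
    (S - N)).const_mul ((2 * π) ^ (-((m + 1 : ℕ) : ℝ) / 2) *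
      ∏ j ∈ Finset.range (m + 1), (√(t (j + 1) - t j))⁻¹) using 2
  have hsqrt : √(π / (2 * d)⁻¹) = √(2 * π) * √d := by
    rw [div_inv_eq_mul, ← sqrt_mul (by positivity)]
    ring_nf
  have hphase_shift : S - N + π / 4 = S - (((m + 1 : ℕ) : ℝ) - 1) * π / 4 := by
    simp only [N]
    push_cast
    ring
  rw [Finset.prod_range_succ, ← hd_def, hsqrt, hphase_shift,
    ← rpow_neg_div_two_mul_sqrt (by positivity)]
  field_simp [(sqrt_pos.mpr hd).ne']

theorem fresnel_pseudo_process_consistency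
    (n : ℕ) (hn : 1 ≤ n) (t x : ℕ → ℝ)
    (ht0 : t 0 = 0) (hmono : ∀ j < n, t j < t (j + 1)) (hx0 : x 0 = 0) :
    Tendsto (fun A : ℝ =>
        ∫ xn in (-A)..A,
          (2 * Real.pi) ^ (-(n : ℝ) / 2) *
            (∏ j ∈ Finset.range n, (Real.sqrt (t (j + 1) - t j))⁻¹) *
            Real.cos
              ((∑ j ∈ Finset.range (n - 1),
                  (x (j + 1) - x j) ^ 2 / (2 * (t (j + 1) - t j))) +
                (xn - x (n - 1)) ^ 2 / (2 * (t n - t (n - 1))) -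
                n * Real.pi / 4))
      atTop
      (nhds
        ((2 * Real.pi) ^ (-((n : ℝ) - 1) / 2) *
          (∏ j ∈ Finset.range (n - 1), (Real.sqrt (t (j + 1) - t j))⁻¹) *
          Real.cos
            ((∑ j ∈ Finset.range (n - 1),
                (x (j + 1) - x j) ^ 2 / (2 * (t (j + 1) - t j))) -
              ((n : ℝ) - 1) * Real.pi / 4))) :=
  fresnel_pseudo_process_consistency_general n hn t x hmono
end

section
/- For every t > 0 and x ∈ ℝ: ∫_0^∞ (1/√(2πs))·cos(x²/(2s) − π/4)·(t·e^{−t²/(2s)}/√(2πs³)) ds = (t/(π√2))·(t² + x²)/(t⁴ + x⁴). -/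
/-!
The two square roots combine to `2πs²`, so the substitution `u = 1/s` turns the integral into the
Laplace transform `(t/2π) ∫₀^∞ e^{-t²u/2} cos (x²u/2 - π/4) du`. This is evaluated with the
explicit primitive `e^{-au} (b sin (bu - c) - a cos (bu - c)) / (a² + b²)` of
`e^{-au} cos (bu - c)`, which vanishes at infinity, and `cos (π/4) = sin (π/4) = √2/2`.
-/

open Real MeasureTheory Filter Set Topology

theorem integral_comp_inv_Ioi {E : Type*} [NormedAddCommGroup E] [NormedSpace ℝ E]
    (g : ℝ → E) :
    ∫ x in Ioi 0, (x ^ 2)⁻¹ • g x⁻¹ = ∫ y in Ioi 0, g y := by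
  rw [← integral_comp_rpow_Ioi g (p := -1) (by norm_num)]
  refine setIntegral_congr_fun measurableSet_Ioi fun x hx => ?_
  norm_num [rpow_neg (le_of_lt hx), rpow_neg_one]

theorem hasDerivAt_exp_neg_mul_cos_primitive {a b : ℝ} (c : ℝ) (hab : a ^ 2 + b ^ 2 ≠ 0)
    (u : ℝ) :
    HasDerivAt (fun u => exp (-a * u) * (b * sin (b * u - c) - a * cos (b * u - c)) /
      (a ^ 2 + b ^ 2)) (exp (-a * u) * cos (b * u - c)) u := by
  have hlin : ∀ k d : ℝ, HasDerivAt (fun u => k * u - d) k u := fun k d => by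
    simpa using ((hasDerivAt_id u).const_mul k).sub_const d
  have hexp := (hlin (-a) 0).exp
  simp only [sub_zero] at hexp
  refine ((hexp.fun_mul (((hlin b c).sin.const_mul b).fun_sub
    ((hlin b c).cos.const_mul a))).div_const (a ^ 2 + b ^ 2)).congr_deriv ?_
  field_simp
  ring

theorem integral_exp_neg_mul_cos_Ioi {a : ℝ} (b c : ℝ) (ha : 0 < a) :
    ∫ u in Ioi 0, exp (-a * u) * cos (b * u - c) = (a * cos c + b * sin c) / (a ^ 2 + b ^ 2) := by
  have hab : a ^ 2 + b ^ 2 ≠ 0 := by positivity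
  have hint : IntegrableOn (fun u => exp (-a * u) * cos (b * u - c)) (Ioi 0) := by
    refine (exp_neg_integrableOn_Ioi 0 ha).mono' (by fun_prop) (ae_of_all _ fun u => ?_)
    rw [norm_mul, norm_of_nonneg (exp_pos _).le]
    exact mul_le_of_le_one_right (exp_pos _).le (abs_cos_le_one _)
  have hlim : Tendsto (fun u => exp (-a * u) * (b * sin (b * u - c) - a * cos (b * u - c)) /
      (a ^ 2 + b ^ 2)) atTop (𝓝 0) := by
    have hdecay : Tendsto (fun u => exp (-a * u)) atTop (𝓝 0) :=
      tendsto_exp_atBot.comp (tendsto_id.const_mul_atTop_of_neg (neg_lt_zero.mpr ha))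
    have hbdd : IsBoundedUnder (· ≤ ·) atTop
        (fun u => ‖b * sin (b * u - c) - a * cos (b * u - c)‖) :=
      isBoundedUnder_of ⟨|b| + |a|, fun u => (norm_sub_le _ _).trans (by
        simp only [norm_mul, Real.norm_eq_abs]
        gcongr
        · exact mul_le_of_le_one_right (abs_nonneg _) (abs_sin_le_one _)
        · exact mul_le_of_le_one_right (abs_nonneg _) (abs_cos_le_one _))⟩
    simpa using (hdecay.zero_mul_isBoundedUnder_le hbdd).div_const (a ^ 2 + b ^ 2)
  rw [integral_Ioi_of_hasDerivAt_of_tendsto'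
    (fun u _ => hasDerivAt_exp_neg_mul_cos_primitive c hab u) hint hlim]
  simp only [mul_zero, exp_zero, zero_sub, sin_neg, cos_neg, one_mul]
  ring

theorem fresnel_passage_integrand_eq (t x : ℝ) {s : ℝ} (hs : 0 < s) :
    (√(2 * π * s))⁻¹ * cos (x ^ 2 / (2 * s) - π / 4) *
        (t * exp (-t ^ 2 / (2 * s)) / √(2 * π * s ^ 3)) =
      (s ^ 2)⁻¹ • (t / (2 * π) * (exp (-(t ^ 2 / 2) * s⁻¹) * cos (x ^ 2 / 2 * s⁻¹ - π / 4))) := by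
  have hsqrt : √(2 * π * s) * √(2 * π * s ^ 3) = 2 * π * s ^ 2 := by
    rw [← sqrt_mul (by positivity),
      show 2 * π * s * (2 * π * s ^ 3) = (2 * π * s ^ 2) ^ 2 by ring, sqrt_sq (by positivity)]
  have hs' := hs.ne'
  rw [smul_eq_mul, div_eq_mul_inv _ √(2 * π * s ^ 3)]
  calc _ = t * exp (-t ^ 2 / (2 * s)) * cos (x ^ 2 / (2 * s) - π / 4) *
        (√(2 * π * s) * √(2 * π * s ^ 3))⁻¹ := by rw [mul_inv]; ring
    _ = _ := by
      rw [hsqrt]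
      field_simp

theorem fresnel_at_passage_time_density (t x : ℝ) (ht : 0 < t) :
    ∫ s in Set.Ioi (0 : ℝ),
        (Real.sqrt (2 * Real.pi * s))⁻¹ * Real.cos (x ^ 2 / (2 * s) - Real.pi / 4) *
          (t * Real.exp (-t ^ 2 / (2 * s)) / Real.sqrt (2 * Real.pi * s ^ 3)) =
      (t / (Real.pi * Real.sqrt 2)) * ((t ^ 2 + x ^ 2) / (t ^ 4 + x ^ 4)) := by
  calc _ = ∫ s in Ioi 0, (s ^ 2)⁻¹ •
        (t / (2 * π) * (exp (-(t ^ 2 / 2) * s⁻¹) * cos (x ^ 2 / 2 * s⁻¹ - π / 4))) :=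
      setIntegral_congr_fun measurableSet_Ioi fun s hs => fresnel_passage_integrand_eq t x hs
    _ = ∫ u in Ioi 0, t / (2 * π) * (exp (-(t ^ 2 / 2) * u) * cos (x ^ 2 / 2 * u - π / 4)) :=
      integral_comp_inv_Ioi fun u =>
        t / (2 * π) * (exp (-(t ^ 2 / 2) * u) * cos (x ^ 2 / 2 * u - π / 4))
    _ = t / (2 * π) * ((t ^ 2 / 2 * cos (π / 4) + x ^ 2 / 2 * sin (π / 4)) /
        ((t ^ 2 / 2) ^ 2 + (x ^ 2 / 2) ^ 2)) := by
      rw [integral_const_mul, integral_exp_neg_mul_cos_Ioi _ _ (by positivity)]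
    _ = _ := by
      rw [cos_pi_div_four, sin_pi_div_four]
      have h2 : √2 ^ 2 = 2 := sq_sqrt zero_le_two
      field_simp
      linear_combination h2
end

section
/- For every x ∈ ℝ and t > 0, the series (1/(π√(2t)))·Σ_{m=0}^∞ (1/m!)·(−√2|x|/√t)^m · cos((m+1)π/4)·sin((m+1)π/2)·Γ((m+1)/2) equals (1/√(2πt))·cos(x²/(2t) − π/4). -/
/-!
Odd-index terms vanish because `sin ((m + 1) π / 2) = sin ((n + 1) π) = 0` for `m = 2n + 1`.
For `m = 2n`, Legendre's duplication `Γ(n + 1/2) = √π (2n)! / (4ⁿ n!)` cancels the `(2n)!`,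
leaving `√π · cos((2n+1)π/4) sin((2n+1)π/2) · (a²/4)ⁿ / n!` with `a = -√2|x|/√t`. The
trigonometric factor is `(√2/2)(-1)^⌊n/2⌋`, so the even and odd `n` give the cosine and sine
series at `u = a²/4 = x²/(2t)`, and `cos u + sin u = √2 cos (u - π/4)`.
-/

open Real Nat

lemma Real.Gamma_nat_add_half_eq_factorial (n : ℕ) :
    Gamma (n + 1 / 2) = √π * (2 * n)! / (4 ^ n * n !) := by
  have hfact : (2 * n)! = (2 * n - 1)‼ * (2 ^ n * n !) := by
    rw [← doubleFactorial_two_mul]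
    rcases n with _ | n
    · rfl
    · rw [show 2 * (n + 1) = 2 * n + 1 + 1 by ring, factorial_eq_mul_doubleFactorial, mul_comm]
      rfl
  have hfour : (4 : ℝ) ^ n = 2 ^ n * 2 ^ n := by rw [← mul_pow]; norm_num
  rw [Gamma_nat_add_half, hfact, cast_mul, cast_mul, cast_pow, cast_ofNat, hfour]
  field_simp

lemma Real.hasSum_cos_add_sin (u : ℝ) :
    HasSum (fun n : ℕ => (-1) ^ (n / 2) * u ^ n / n !) (cos u + sin u) := by
  refine HasSum.even_add_odd ?_ ?_
  · simpa using hasSum_cos u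
  · convert hasSum_sin u using 3 with k
    rw [show (2 * k + 1) / 2 = k by omega]

lemma Real.cos_mul_sin_odd_mul_pi (n : ℕ) :
    cos ((2 * n + 1) * π / 4) * sin ((2 * n + 1) * π / 2) = √2 / 2 * (-1) ^ (n / 2) := by
  have hsin : sin ((2 * n + 1) * π / 2) = (-1) ^ n := by
    rw [show (2 * n + 1) * π / 2 = π / 2 + n * π by ring, sin_add_nat_mul_pi, sin_pi_div_two,
      mul_one]
  obtain ⟨k, rfl | rfl⟩ := n.even_or_odd'
  · rw [show (2 * ((2 * k : ℕ) : ℝ) + 1) * π / 4 = π / 4 + k * π by push_cast; ring,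
      cos_add_nat_mul_pi, cos_pi_div_four, hsin, (even_two_mul k).neg_one_pow,
      Nat.mul_div_cancel_left k two_pos]
    ring
  · rw [show (2 * ((2 * k + 1 : ℕ) : ℝ) + 1) * π / 4 = (π - π / 4) + k * π by push_cast; ring,
      cos_add_nat_mul_pi, cos_pi_sub, cos_pi_div_four, hsin, (odd_two_mul_add_one k).neg_one_pow,
      show (2 * k + 1) / 2 = k by omega]
    ring

noncomputable def fresnelSeriesTerm (a : ℝ) (m : ℕ) : ℝ :=
  (1 / m ! : ℝ) * a ^ m * cos ((m + 1) * π / 4) * sin ((m + 1) * π / 2) * Gamma ((m + 1) / 2)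

lemma fresnelSeriesTerm_two_mul_add_one (a : ℝ) (n : ℕ) :
    fresnelSeriesTerm a (2 * n + 1) = 0 := by
  have harg : ((2 * n + 1 : ℕ) + 1 : ℝ) * π / 2 = (n + 1 : ℕ) * π := by push_cast; ring
  rw [fresnelSeriesTerm, harg, sin_nat_mul_pi, mul_zero, zero_mul]

lemma fresnelSeriesTerm_two_mul (a : ℝ) (n : ℕ) :
    fresnelSeriesTerm a (2 * n) = √π * (√2 / 2) * ((-1) ^ (n / 2) * (a ^ 2 / 4) ^ n / n !) := by
  have hGamma : Gamma (((2 * n : ℕ) + 1 : ℝ) / 2) = √π * (2 * n)! / (4 ^ n * n !) := by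
    rw [← Gamma_nat_add_half_eq_factorial]
    push_cast
    ring_nf
  rw [fresnelSeriesTerm, hGamma, mul_assoc _ (cos _), cast_mul, cast_ofNat,
    cos_mul_sin_odd_mul_pi, pow_mul, div_pow]
  field_simp

theorem hasSum_fresnelSeriesTerm (a : ℝ) :
    HasSum (fresnelSeriesTerm a) (√π * cos (a ^ 2 / 4 - π / 4)) := by
  have hsum := HasSum.even_add_odd (f := fresnelSeriesTerm a)
    (by simpa only [fresnelSeriesTerm_two_mul] using
      (hasSum_cos_add_sin (a ^ 2 / 4)).mul_left (√π * (√2 / 2)))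
    (by simpa only [fresnelSeriesTerm_two_mul_add_one] using hasSum_zero)
  convert hsum using 1
  rw [cos_sub, cos_pi_div_four, sin_pi_div_four]
  ring

theorem fractional_series_specializes_to_fresnel (x t : ℝ) (ht : 0 < t) :
    (1 / (Real.pi * Real.sqrt (2 * t))) *
        ∑' m : ℕ, (1 / Nat.factorial m : ℝ) *
          (-Real.sqrt 2 * |x| / Real.sqrt t) ^ m *
          Real.cos ((m + 1) * Real.pi / 4) * Real.sin ((m + 1) * Real.pi / 2) *
          Real.Gamma ((m + 1) / 2) =
      (Real.sqrt (2 * Real.pi * t))⁻¹ * Real.cos (x ^ 2 / (2 * t) - Real.pi / 4) := by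
  have hu : (-√2 * |x| / √t) ^ 2 / 4 = x ^ 2 / (2 * t) := by
    rw [div_pow, mul_pow, neg_sq, sq_sqrt zero_le_two, sq_abs, sq_sqrt ht.le]
    ring
  have hconst : 1 / (π * √(2 * t)) * √π = (√(2 * π * t))⁻¹ := by
    rw [mul_right_comm, sqrt_mul (by positivity) π]
    nth_rewrite 1 [← mul_self_sqrt pi_pos.le]
    field_simp
  change _ * ∑' m, fresnelSeriesTerm (-√2 * |x| / √t) m = _
  rw [(hasSum_fresnelSeriesTerm _).tsum_eq, hu, ← mul_assoc, hconst]
end
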